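/- arXiv:1909.05396 — 2 statements merged into one kernel-verified Lean document; each statement's English description precedes it below -/
import Mathlib

section
/- For every λ > 0 and every bounded continuous function f : X → ℝ, the function P_λ f : X → ℝ, x ↦ ∫₀^∞ λ e^{−λ t} ∫_Θ p(S(t,x),θ) f(w_θ(S(t,x))) dθ dt, is bounded and continuous (i.e., the Markov operator P_λ is Feller). -/
open MeasureTheory Real

/-!
Writing `g x = ∫ p(x,θ) f(w_θ x) dθ`, we have `P_λ f x = ∫₀^∞ λ e^{-λt} g(S(t,x)) dt`, and both
integrals are averages against probability densities, so `|P_λ f| ≤ sup |f|`. For continuity of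
`g` at `x₀`, split `g x - g x₀` into `∫ (p x - p x₀) f(w_θ x)`, controlled by `sup |f|` times the
`L¹` distance of `p x` and `p x₀` (small by (A4)), and `∫ p x₀ (f(w_θ x) - f(w_θ x₀))`, small by
dominated convergence. Continuity of `P_λ f` is then dominated convergence in `t`.
-/

open Set Filter Topology

theorem abs_integral_mul_le_of_integral_eq_one {α : Type*} [MeasurableSpace α]
    {μ : Measure α} {k b : α → ℝ} {C : ℝ} (hk0 : ∀ a, 0 ≤ k a)
    (hk1 : ∫ a, k a ∂μ = 1) (hb : ∀ a, |b a| ≤ C) : |∫ a, k a * b a ∂μ| ≤ C := by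
  have hk : Integrable k μ := .of_integral_ne_zero (by simp [hk1])
  have hkb : ∀ a, ‖k a * b a‖ ≤ k a * C := fun a => by
    rw [Real.norm_eq_abs, abs_mul, abs_of_nonneg (hk0 a)]
    exact mul_le_mul_of_nonneg_left (hb a) (hk0 a)
  calc |∫ a, k a * b a ∂μ| ≤ ∫ a, k a * C ∂μ :=
        norm_integral_le_of_norm_le (hk.mul_const C) (ae_of_all _ hkb)
    _ = C := by rw [integral_mul_const, hk1, one_mul]

theorem setIntegral_Ici_exp_density {lam : ℝ} (hlam : 0 < lam) :
    ∫ t in Ici (0 : ℝ), lam * exp (-(lam * t)) = 1 := by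
  have h := integral_exp_mul_Ioi (a := -lam) (by linarith) 0
  simp only [neg_mul, mul_zero, exp_zero] at h
  rw [integral_Ici_eq_integral_Ioi, integral_const_mul, h]
  field_simp

theorem continuous_integral_mul_of_tendsto_integral_abs_sub {X Θ : Type*} [TopologicalSpace X]
    [FirstCountableTopology X] [MeasurableSpace Θ] {ϑ : Measure Θ} {p h : X → Θ → ℝ} {C : ℝ}
    (hp : ∀ x, Integrable (p x) ϑ)
    (hpL1 : ∀ x₀, Tendsto (fun x => ∫ θ, |p x θ - p x₀ θ| ∂ϑ) (𝓝 x₀) (𝓝 0))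
    (hh_meas : ∀ x, AEStronglyMeasurable (h x) ϑ) (hh_cont : ∀ θ, Continuous fun x => h x θ)
    (hhC : ∀ x θ, |h x θ| ≤ C) :
    Continuous fun x => ∫ θ, p x θ * h x θ ∂ϑ := by
  have habs : ∀ (a : ℝ) y θ, ‖a * h y θ‖ ≤ |a| * C := fun a y θ => by
    rw [Real.norm_eq_abs, abs_mul]
    exact mul_le_mul_of_nonneg_left (hhC y θ) (abs_nonneg _)
  have hint : ∀ x y, Integrable (fun θ => p x θ * h y θ) ϑ := fun x y =>
    ((hp x).abs.mul_const C).mono' ((hp x).1.mul (hh_meas y)) (ae_of_all _ fun θ => habs _ y θ)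
  refine continuous_iff_continuousAt.2 fun x₀ => ?_
  have h_frozen : Tendsto (fun x => ∫ θ, p x₀ θ * h x θ ∂ϑ) (𝓝 x₀)
      (𝓝 (∫ θ, p x₀ θ * h x₀ θ ∂ϑ)) :=
    (continuous_of_dominated (fun x => (hp x₀).1.mul (hh_meas x))
      (fun x => ae_of_all _ fun θ => habs _ x θ) ((hp x₀).abs.mul_const C)
      (ae_of_all _ fun θ => continuous_const.mul (hh_cont θ))).continuousAt
  have h_diff : Tendsto (fun x => ∫ θ, p x θ * h x θ ∂ϑ - ∫ θ, p x₀ θ * h x θ ∂ϑ) (𝓝 x₀)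
      (𝓝 0) := by
    refine squeeze_zero_norm (fun x => ?_) (by simpa using (hpL1 x₀).mul_const C)
    rw [← integral_sub (hint x x) (hint x₀ x), ← integral_mul_const]
    refine norm_integral_le_of_norm_le (((hp x).sub (hp x₀)).abs.mul_const C)
      (ae_of_all _ fun θ => ?_)
    rw [← sub_mul]
    exact habs _ x θ
  simpa [ContinuousAt] using h_frozen.add h_diff

theorem continuous_setIntegral_mul_comp {Y : Type*} [TopologicalSpace Y]
    [FirstCountableTopology Y] {s : Set ℝ} (hs : MeasurableSet s) {k : ℝ → ℝ}
    (hk : IntegrableOn k s) {S : ℝ → Y → Y}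
    (hS : ContinuousOn (fun q : ℝ × Y => S q.1 q.2) (s ×ˢ univ)) {g : Y → ℝ} {C : ℝ}
    (hg : Continuous g) (hgC : ∀ y, |g y| ≤ C) :
    Continuous fun x => ∫ t in s, k t * g (S t x) := by
  refine continuous_of_dominated (bound := fun t => |k t| * C) (fun x => ?_)
    (fun x => ae_of_all _ fun t => ?_) (hk.abs.mul_const C)
    ((ae_restrict_mem hs).mono fun t ht => continuous_const.mul (hg.comp
      (hS.comp_continuous (continuous_const.prodMk continuous_id) fun _ => ⟨ht, trivial⟩)))
  · have hSx : ContinuousOn (fun t => S t x) s :=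
      hS.comp (continuous_id.prodMk continuous_const).continuousOn fun _ ht => ⟨ht, trivial⟩
    exact hk.1.mul ((hg.comp_continuousOn hSx).aestronglyMeasurable hs)
  · rw [Real.norm_eq_abs, abs_mul]
    exact mul_le_mul_of_nonneg_left (hgC _) (abs_nonneg _)

theorem stmt_12_general
    {H : Type*} [NormedAddCommGroup H]
    {Θ : Type*} [TopologicalSpace Θ] [MeasurableSpace Θ] [BorelSpace Θ]
    (ϑ : Measure Θ)
    (X : Set H)
    (S : ℝ → X → X)
    (hScont : ContinuousOn (fun q : ℝ × X => S q.1 q.2) (Set.Ici 0 ×ˢ Set.univ))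
    (w : Θ → X → X) (hw : Continuous fun q : X × Θ => w q.2 q.1)
    (p : X → Θ → ℝ)
    (hp0 : ∀ x θ, 0 ≤ p x θ) (hp1 : ∀ x, ∫ θ, p x θ ∂ϑ = 1)
    (Lp : ℝ)
    (hA4 : ∀ x y : X, ∫ θ, |p x θ - p y θ| ∂ϑ ≤ Lp * ‖(x : H) - y‖)
    (lam : ℝ) (hlam : 0 < lam)
    (f : X → ℝ) (hfc : Continuous f) (hfb : ∃ C : ℝ, ∀ z, |f z| ≤ C) :
    (∃ C : ℝ, ∀ x : X,
      |∫ t in Set.Ici (0 : ℝ), lam * Real.exp (-(lam * t)) *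
          ∫ θ, p (S t x) θ * f (w θ (S t x)) ∂ϑ| ≤ C) ∧
    Continuous (fun x : X => ∫ t in Set.Ici (0 : ℝ), lam * Real.exp (-(lam * t)) *
        ∫ θ, p (S t x) θ * f (w θ (S t x)) ∂ϑ) := by
  obtain ⟨C, hC⟩ := hfb
  have hpL1 : ∀ x₀ : X, Tendsto (fun x => ∫ θ, |p x θ - p x₀ θ| ∂ϑ) (𝓝 x₀) (𝓝 0) := fun x₀ =>
    squeeze_zero (fun _ => integral_nonneg fun _ => abs_nonneg _) (fun x => hA4 x x₀)
      (by simpa using ((continuous_subtype_val.tendsto x₀).sub_const (x₀ : H)).norm.const_mul Lp)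
  have hg_cont : Continuous fun x => ∫ θ, p x θ * f (w θ x) ∂ϑ :=
    continuous_integral_mul_of_tendsto_integral_abs_sub
      (fun x => .of_integral_ne_zero (by simp [hp1])) hpL1
      (fun x => (hfc.comp (hw.comp (Continuous.prodMk_right x))).aestronglyMeasurable)
      (fun _ => hfc.comp (hw.comp (continuous_id.prodMk continuous_const))) fun _ _ => hC _
  have hg_bdd : ∀ x, |∫ θ, p x θ * f (w θ x) ∂ϑ| ≤ C := fun x =>
    abs_integral_mul_le_of_integral_eq_one (hp0 x) (hp1 x) fun _ => hC _
  have hk1 := setIntegral_Ici_exp_density hlam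
  exact ⟨⟨C, fun x => abs_integral_mul_le_of_integral_eq_one (fun _ => by positivity) hk1
      fun _ => hg_bdd _⟩,
    continuous_setIntegral_mul_comp measurableSet_Ici (.of_integral_ne_zero (by simp [hk1]))
      hScont hg_cont hg_bdd⟩

/-- For every `λ > 0` and every bounded continuous `f : X → ℝ`, the
function `P_λ f : x ↦ ∫₀^∞ λ e^{−λt} ∫_Θ p(S(t,x),θ) f(w_θ(S(t,x))) dθ dt` is bounded and
continuous (the Markov operator `P_λ` is Feller). -/
theorem stmt_12
    {H : Type*} [NormedAddCommGroup H] [NormedSpace ℝ H] [CompleteSpace H]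
    [SecondCountableTopology H] [MeasurableSpace H] [BorelSpace H]
    {Θ : Type*} [TopologicalSpace Θ] [MeasurableSpace Θ] [BorelSpace Θ]
    (ϑ : Measure Θ) [SigmaFinite ϑ]
    (X : Set H) (hXc : IsClosed X) (hXne : X.Nonempty)
    (S : ℝ → X → X)
    (hS0 : ∀ x, S 0 x = x)
    (hSadd : ∀ s t : ℝ, 0 ≤ s → 0 ≤ t → ∀ x, S (s + t) x = S s (S t x))
    (hScont : ContinuousOn (fun q : ℝ × X => S q.1 q.2) (Set.Ici 0 ×ˢ Set.univ))
    (w : Θ → X → X) (hw : Continuous fun q : X × Θ => w q.2 q.1)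
    (p : X → Θ → ℝ) (hpcont : Continuous fun q : X × Θ => p q.1 q.2)
    (hp0 : ∀ x θ, 0 ≤ p x θ) (hp1 : ∀ x, ∫ θ, p x θ ∂ϑ = 1)
    (Lp : ℝ) (hLp : 0 < Lp)
    (hA4 : ∀ x y : X, ∫ θ, |p x θ - p y θ| ∂ϑ ≤ Lp * ‖(x : H) - y‖)
    (lam : ℝ) (hlam : 0 < lam)
    (f : X → ℝ) (hfc : Continuous f) (hfb : ∃ C : ℝ, ∀ z, |f z| ≤ C) :
    (∃ C : ℝ, ∀ x : X,
      |∫ t in Set.Ici (0 : ℝ), lam * Real.exp (-(lam * t)) *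
          ∫ θ, p (S t x) θ * f (w θ (S t x)) ∂ϑ| ≤ C) ∧
    Continuous (fun x : X => ∫ t in Set.Ici (0 : ℝ), lam * Real.exp (-(lam * t)) *
        ∫ θ, p (S t x) θ * f (w θ (S t x)) ∂ϑ) :=
  stmt_12_general ϑ X S hScont w hw p hp0 hp1 Lp hA4 lam hlam f hfc hfb
end

section
/- (Continuous dependence of the invariant measure of the PDMP on the jump rate.) Assume (A2) and let ᾱ := max{0, α}. Let λ̄ > ᾱ, and let (μ_λ) be a family of Borel probability measures on X, indexed by λ in an interval of (ᾱ, ∞) containing λ̄, such that ‖μ_λ − μ_λ̄‖_FM → 0 as λ → λ̄. Define ν_λ := μ_λ G_λ. Then ‖ν_λ − ν_λ̄‖_FM → 0 as λ → λ̄; in particular, ν_λ converges weakly to ν_λ̄, i.e., ∫_X f dν_λ → ∫_X f dν_λ̄ for every bounded continuous f : X → ℝ. -/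
/-!
Write `(G_λ f)(x) = ∫₀^∞ λ e^{-λt} f(S(t,x)) dt`, so that `ν_λ(f) = μ_λ(G_λ f)`. By (A2), if
`‖f‖_∞ ≤ 1` and `f` is 1-Lipschitz then `G_λ̄ f` is bounded by 1 and `Lλ̄/(λ̄-α)`-Lipschitz, hence
`|ν_λ(f) - ν_λ̄(f)| ≤ |μ_λ(G_λ f - G_λ̄ f)| + |(μ_λ - μ_λ̄)(G_λ̄ f)|
  ≤ ‖λe^{-λ·} - λ̄e^{-λ̄·}‖_{L¹(0,∞)} + max(1, Lλ̄/(λ̄-α)) ‖μ_λ - μ_λ̄‖_FM`,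
and the L¹ distance of the exponential densities tends to 0 by dominated convergence.
For a bounded continuous `f` the same splitting works: the first term is at most `‖f‖_∞` times that
L¹ distance, and the second tends to 0 because FM convergence implies weak convergence (bounded
Lipschitz functions detect it) and `G_λ̄ f` is bounded and continuous.
-/

open MeasureTheory Real Filter Set Topology BoundedContinuousFunction

/-- `‖μ - ν‖_FM` is `fortetMourierDist (∫ · ∂μ) (∫ · ∂ν)`. It is phrased for functionals so that it
also applies to `μ G_λ`, which is only given through its integrals `f ↦ ∫ expAverage S λ f ∂μ`. -/
noncomputable def fortetMourierDist {Ω : Type*} [PseudoMetricSpace Ω] (Φ Ψ : (Ω → ℝ) → ℝ) : ℝ :=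
  sSup {r : ℝ | ∃ f : Ω → ℝ, (∀ z, |f z| ≤ 1) ∧ LipschitzWith 1 f ∧ r = |Φ f - Ψ f|}

lemma abs_integral_le_of_abs_le {Ω : Type*} [MeasurableSpace Ω] (μ : Measure Ω)
    [IsProbabilityMeasure μ] {f : Ω → ℝ} {C : ℝ} (hf : ∀ z, |f z| ≤ C) :
    |∫ x, f x ∂μ| ≤ C := by
  simpa using norm_integral_le_of_norm_le_const (μ := μ)
    (ae_of_all _ fun z => (norm_eq_abs (f z)).trans_le (hf z))

section FortetMourier

variable {Ω : Type*} [PseudoMetricSpace Ω]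

lemma fortetMourierDist_nonneg (Φ Ψ : (Ω → ℝ) → ℝ) : 0 ≤ fortetMourierDist Φ Ψ :=
  Real.sSup_nonneg fun _ ⟨_, _, _, hr⟩ => hr ▸ abs_nonneg _

lemma fortetMourierDist_le {Φ Ψ : (Ω → ℝ) → ℝ} {B : ℝ} (hB : 0 ≤ B)
    (h : ∀ f : Ω → ℝ, (∀ z, |f z| ≤ 1) → LipschitzWith 1 f → |Φ f - Ψ f| ≤ B) :
    fortetMourierDist Φ Ψ ≤ B :=
  Real.sSup_le (fun _ ⟨f, hf, hfL, hr⟩ => hr ▸ h f hf hfL) hB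

variable [MeasurableSpace Ω] (μ ν : Measure Ω) [IsProbabilityMeasure μ] [IsProbabilityMeasure ν]

lemma abs_integral_sub_integral_le_fortetMourierDist {f : Ω → ℝ} (hf : ∀ z, |f z| ≤ 1)
    (hfL : LipschitzWith 1 f) :
    |∫ x, f x ∂μ - ∫ x, f x ∂ν| ≤
      fortetMourierDist (fun g => ∫ x, g x ∂μ) (fun g => ∫ x, g x ∂ν) := by
  refine le_csSup ⟨2, ?_⟩ ⟨f, hf, hfL, rfl⟩
  rintro _ ⟨g, hg, -, rfl⟩
  calc |∫ x, g x ∂μ - ∫ x, g x ∂ν| ≤ |∫ x, g x ∂μ| + |∫ x, g x ∂ν| := abs_sub _ _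
    _ ≤ 1 + 1 := add_le_add (abs_integral_le_of_abs_le μ hg) (abs_integral_le_of_abs_le ν hg)
    _ = 2 := by norm_num

lemma abs_integral_sub_integral_le_mul_fortetMourierDist {f : Ω → ℝ} {c : ℝ} (hc : 0 < c)
    (hf : ∀ z, |f z| ≤ c) (hfL : ∀ x y, dist (f x) (f y) ≤ c * dist x y) :
    |∫ x, f x ∂μ - ∫ x, f x ∂ν| ≤
      c * fortetMourierDist (fun g => ∫ x, g x ∂μ) (fun g => ∫ x, g x ∂ν) := by
  have h := abs_integral_sub_integral_le_fortetMourierDist μ ν (f := fun x => f x / c)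
    (fun z => by rw [abs_div, abs_of_pos hc, div_le_one hc]; exact hf z)
    (LipschitzWith.of_dist_le_mul fun x y => by
      rw [Real.dist_eq, ← sub_div, abs_div, abs_of_pos hc, div_le_iff₀' hc, NNReal.coe_one,
        one_mul, ← Real.dist_eq]
      exact hfL x y)
  rwa [integral_div, integral_div, ← sub_div, abs_div, abs_of_pos hc, div_le_iff₀' hc] at h

end FortetMourier

section WeakConvergence

variable {Ω : Type*} [PseudoMetricSpace Ω] [MeasurableSpace Ω] [OpensMeasurableSpace Ω]

theorem tendsto_of_tendsto_fortetMourierDist {γ : Type*} {F : Filter γ} [F.IsCountablyGenerated]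
    {μs : γ → ProbabilityMeasure Ω} {μ : ProbabilityMeasure Ω}
    (h : Tendsto (fun i => fortetMourierDist (fun f => ∫ x, f x ∂(μs i : Measure Ω))
      (fun f => ∫ x, f x ∂(μ : Measure Ω))) F (𝓝 0)) :
    Tendsto μs F (𝓝 μ) := by
  refine tendsto_iff_forall_lipschitz_integral_tendsto.2 fun f ⟨C, hC⟩ ⟨K, hK⟩ => ?_
  let fb : Ω →ᵇ ℝ := ⟨⟨f, hK.continuous⟩, C, hC⟩
  set c : ℝ := max (max ‖fb‖ K) 1
  have hc : 0 < c := lt_max_of_lt_right one_pos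
  rw [tendsto_iff_norm_sub_tendsto_zero]
  refine squeeze_zero (fun _ => norm_nonneg _) (fun i => ?_) (by simpa using h.const_mul c)
  refine abs_integral_sub_integral_le_mul_fortetMourierDist _ _ hc
    (fun z => (fb.norm_coe_le_norm z).trans ((le_max_left _ _).trans (le_max_left _ _)))
    (fun x y => ?_)
  exact (hK.dist_le_mul x y).trans (mul_le_mul_of_nonneg_right
    ((le_max_right _ _).trans (le_max_left _ _)) dist_nonneg)

theorem tendsto_integral_nhdsWithin_of_tendsto_fortetMourierDist {α : Type*} [TopologicalSpace α]
    [FirstCountableTopology α] {I : Set α} {a : α} (ha : a ∈ I) {μ : α → Measure Ω}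
    (hμ : ∀ b ∈ I, IsProbabilityMeasure (μ b))
    (h : Tendsto (fun b => fortetMourierDist (fun f => ∫ x, f x ∂(μ b))
      (fun f => ∫ x, f x ∂(μ a))) (𝓝[I] a) (𝓝 0)) (g : Ω →ᵇ ℝ) :
    Tendsto (fun b => ∫ x, g x ∂(μ b)) (𝓝[I] a) (𝓝 (∫ x, g x ∂(μ a))) := by
  let ν : I → ProbabilityMeasure Ω := fun b => ⟨μ b, hμ b b.2⟩
  have hν : Tendsto ν (𝓝 ⟨a, ha⟩) (𝓝 (ν ⟨a, ha⟩)) :=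
    tendsto_of_tendsto_fortetMourierDist ((tendsto_nhdsWithin_iff_subtype ha _ _).1 h)
  exact (tendsto_nhdsWithin_iff_subtype ha _ _).2
    (ProbabilityMeasure.tendsto_iff_forall_integral_tendsto.1 hν g)

end WeakConvergence

lemma integrableOn_exp_neg_mul_Ici {c : ℝ} (hc : 0 < c) :
    IntegrableOn (fun t => exp (-(c * t))) (Ici 0) := by
  rw [integrableOn_Ici_iff_integrableOn_Ioi]
  simpa only [neg_mul] using exp_neg_integrableOn_Ioi 0 hc

lemma integral_exp_neg_mul_Ici {c : ℝ} (hc : 0 < c) :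
    ∫ t in Ici (0 : ℝ), exp (-(c * t)) = c⁻¹ := by
  rw [integral_Ici_eq_integral_Ioi]
  simpa [← neg_mul] using integral_exp_mul_Ioi (neg_neg_of_pos hc) 0

lemma integrableOn_expDensity {l : ℝ} (hl : 0 < l) :
    IntegrableOn (fun t => l * exp (-(l * t))) (Ici 0) :=
  (integrableOn_exp_neg_mul_Ici hl).const_mul l

lemma integral_expDensity {l : ℝ} (hl : 0 < l) :
    ∫ t in Ici (0 : ℝ), l * exp (-(l * t)) = 1 := by
  rw [integral_const_mul, integral_exp_neg_mul_Ici hl, mul_inv_cancel₀ hl.ne']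

lemma expDensity_mul_exp (l α t : ℝ) :
    l * exp (-(l * t)) * exp (α * t) = l * exp (-((l - α) * t)) := by
  rw [mul_assoc, ← exp_add]; ring_nf

lemma integrableOn_expDensity_mul_exp {l α : ℝ} (hαl : α < l) :
    IntegrableOn (fun t => l * exp (-(l * t)) * exp (α * t)) (Ici 0) := by
  simp only [expDensity_mul_exp]
  exact (integrableOn_exp_neg_mul_Ici (sub_pos.2 hαl)).const_mul l

lemma integral_expDensity_mul_exp {l α : ℝ} (hαl : α < l) :
    ∫ t in Ici (0 : ℝ), l * exp (-(l * t)) * exp (α * t) = l / (l - α) := by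
  simp only [expDensity_mul_exp]
  rw [integral_const_mul, integral_exp_neg_mul_Ici (sub_pos.2 hαl), div_eq_mul_inv]

lemma tendsto_integral_abs_expDensity_sub {lbar : ℝ} (hlbar : 0 < lbar) :
    Tendsto (fun l => ∫ t in Ici (0 : ℝ), |l * exp (-(l * t)) - lbar * exp (-(lbar * t))|)
      (𝓝 lbar) (𝓝 0) := by
  have hdom : ∀ᶠ l in 𝓝 lbar, ∀ᵐ t ∂volume.restrict (Ici 0),
      ‖|l * exp (-(l * t)) - lbar * exp (-(lbar * t))|‖ ≤
        3 * lbar * exp (-(lbar / 2 * t)) := by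
    filter_upwards [Ioo_mem_nhds (half_lt_self hlbar) (lt_two_mul_self hlbar)] with l hl
    refine (ae_restrict_iff' measurableSet_Ici).2 (ae_of_all _ fun t (ht : 0 ≤ t) => ?_)
    have hl0 : 0 < l := (half_pos hlbar).trans hl.1
    have e1 : l * exp (-(l * t)) ≤ 2 * lbar * exp (-(lbar / 2 * t)) := by
      gcongr
      · exact hl.2.le
      · exact hl.1.le
    have e2 : lbar * exp (-(lbar * t)) ≤ lbar * exp (-(lbar / 2 * t)) := by
      gcongr
      linarith
    have p1 : 0 ≤ l * exp (-(l * t)) := by positivity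
    have p2 : 0 ≤ lbar * exp (-(lbar * t)) := by positivity
    rw [norm_abs_eq_norm, Real.norm_eq_abs, abs_sub_le_iff]
    constructor <;> linarith
  simpa using tendsto_integral_filter_of_dominated_convergence _
    (Eventually.of_forall fun l => (by fun_prop : Continuous fun t =>
      |l * exp (-(l * t)) - lbar * exp (-(lbar * t))|).aestronglyMeasurable)
    hdom ((integrableOn_exp_neg_mul_Ici (half_pos hlbar)).const_mul (3 * lbar))
    (ae_of_all _ fun t => ((by fun_prop : Continuous fun l : ℝ =>
      |l * exp (-(l * t)) - lbar * exp (-(lbar * t))|).tendsto lbar))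

/-- `(G_λ f)(x)`; thus `∫ x, expAverage S λ f x ∂μ = ∫ f d(μ G_λ)`. -/
noncomputable def expAverage {Ω : Type*} (S : ℝ → Ω → Ω) (l : ℝ) (f : Ω → ℝ) (x : Ω) : ℝ :=
  ∫ t in Ici (0 : ℝ), l * exp (-(l * t)) * f (S t x)

section ExpAverage

variable {Ω : Type*} {S : ℝ → Ω → Ω} {f : Ω → ℝ} {x : Ω} {C l l' : ℝ}

lemma abs_expAverage_le (hl : 0 < l) (hf : ∀ z, |f z| ≤ C) :
    |expAverage S l f x| ≤ C := by
  have h := norm_integral_le_of_norm_le ((integrableOn_expDensity hl).mul_const C)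
    (ae_of_all _ fun t => show ‖l * exp (-(l * t)) * f (S t x)‖ ≤ l * exp (-(l * t)) * C by
      rw [Real.norm_eq_abs, abs_mul, abs_of_pos (by positivity)]
      exact mul_le_mul_of_nonneg_left (hf _) (by positivity))
  rwa [integral_mul_const, integral_expDensity hl, one_mul] at h

variable [TopologicalSpace Ω]

lemma integrableOn_expAverage_integrand (hSx : ContinuousOn (fun t => S t x) (Ici 0))
    (hfc : Continuous f) (hf : ∀ z, |f z| ≤ C) (hl : 0 < l) :
    IntegrableOn (fun t => l * exp (-(l * t)) * f (S t x)) (Ici 0) := by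
  refine ((integrableOn_expDensity hl).mul_const C).mono'
    (((by fun_prop : Continuous fun t => l * exp (-(l * t))).continuousOn.mul
      (hfc.comp_continuousOn hSx)).aestronglyMeasurable measurableSet_Ici)
    (ae_of_all _ fun t => ?_)
  rw [Real.norm_eq_abs, abs_mul, abs_of_pos (by positivity)]
  exact mul_le_mul_of_nonneg_left (hf _) (by positivity)

lemma continuous_expAverage [FirstCountableTopology Ω] (hS : ∀ t, 0 ≤ t → Continuous (S t))
    (hSx : ∀ x, ContinuousOn (fun t => S t x) (Ici 0)) (hfc : Continuous f)
    (hf : ∀ z, |f z| ≤ C) (hl : 0 < l) : Continuous (expAverage S l f) := by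
  refine continuous_of_dominated (bound := fun t => l * exp (-(l * t)) * C)
    (fun x => (integrableOn_expAverage_integrand (hSx x) hfc hf hl).aestronglyMeasurable)
    (fun x => (ae_restrict_iff' measurableSet_Ici).2 (ae_of_all _ fun t _ => ?_))
    ((integrableOn_expDensity hl).mul_const C)
    ((ae_restrict_iff' measurableSet_Ici).2 (ae_of_all _ fun t ht =>
      continuous_const.mul (hfc.comp (hS t ht))))
  rw [Real.norm_eq_abs, abs_mul, abs_of_pos (by positivity)]
  exact mul_le_mul_of_nonneg_left (hf _) (by positivity)

lemma abs_expAverage_sub_expAverage_le (hSx : ContinuousOn (fun t => S t x) (Ici 0))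
    (hfc : Continuous f) (hf : ∀ z, |f z| ≤ C) (hl : 0 < l) (hl' : 0 < l') :
    |expAverage S l f x - expAverage S l' f x| ≤
      (∫ t in Ici (0 : ℝ), |l * exp (-(l * t)) - l' * exp (-(l' * t))|) * C := by
  rw [expAverage, expAverage, ← integral_sub (integrableOn_expAverage_integrand hSx hfc hf hl)
    (integrableOn_expAverage_integrand hSx hfc hf hl'), ← integral_mul_const C]
  refine (norm_eq_abs _).symm.le.trans (norm_integral_le_of_norm_le
    (((integrableOn_expDensity hl).sub (integrableOn_expDensity hl')).abs.mul_const C)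
    (ae_of_all _ fun t => ?_))
  rw [← sub_mul, Real.norm_eq_abs, abs_mul]
  exact mul_le_mul_of_nonneg_left (hf _) (abs_nonneg _)

end ExpAverage

section Metric

variable {Ω : Type*} [PseudoMetricSpace Ω] {S : ℝ → Ω → Ω} {L α l l' : ℝ}

lemma dist_expAverage_le {f : Ω → ℝ} {C K : ℝ} (hSx : ∀ x, ContinuousOn (fun t => S t x) (Ici 0))
    (hSL : ∀ t, 0 ≤ t → ∀ x y, dist (S t x) (S t y) ≤ L * exp (α * t) * dist x y)
    (hfK : ∀ x y, dist (f x) (f y) ≤ K * dist x y) (hfc : Continuous f)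
    (hf : ∀ z, |f z| ≤ C) (hl : 0 < l) (hαl : α < l) (hK : 0 ≤ K) (x y : Ω) :
    dist (expAverage S l f x) (expAverage S l f y) ≤ K * (L * (l / (l - α))) * dist x y := by
  rw [Real.dist_eq, expAverage, expAverage, ← integral_sub
    (integrableOn_expAverage_integrand (hSx x) hfc hf hl)
    (integrableOn_expAverage_integrand (hSx y) hfc hf hl)]
  have hbound : K * (L * (l / (l - α))) * dist x y =
      ∫ t in Ici (0 : ℝ), K * (L * (l * exp (-(l * t)) * exp (α * t))) * dist x y := by
    rw [integral_mul_const, integral_const_mul, integral_const_mul,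
      integral_expDensity_mul_exp hαl]
  rw [hbound]
  refine (norm_eq_abs _).symm.le.trans (norm_integral_le_of_norm_le
    ((((integrableOn_expDensity_mul_exp hαl).const_mul L).const_mul K).mul_const _)
    ((ae_restrict_iff' measurableSet_Ici).2 (ae_of_all _ fun t (ht : 0 ≤ t) => ?_)))
  rw [← mul_sub, Real.norm_eq_abs, abs_mul, abs_of_pos (by positivity), ← Real.dist_eq]
  calc l * exp (-(l * t)) * dist (f (S t x)) (f (S t y))
      ≤ l * exp (-(l * t)) * (K * (L * exp (α * t) * dist x y)) := by
        gcongr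
        exact (hfK _ _).trans (mul_le_mul_of_nonneg_left (hSL t ht x y) hK)
    _ = K * (L * (l * exp (-(l * t)) * exp (α * t))) * dist x y := by ring

variable [MeasurableSpace Ω] [OpensMeasurableSpace Ω]

section Integrated

variable (μ ν : Measure Ω) [IsProbabilityMeasure μ] [IsProbabilityMeasure ν]

lemma abs_integral_expAverage_sub_le (hS : ∀ t, 0 ≤ t → Continuous (S t))
    (hSx : ∀ x, ContinuousOn (fun t => S t x) (Ici 0)) {f : Ω → ℝ} {C : ℝ}
    (hfc : Continuous f) (hf : ∀ z, |f z| ≤ C) (hl : 0 < l) (hl' : 0 < l') :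
    |∫ x, expAverage S l f x ∂μ - ∫ x, expAverage S l' f x ∂μ| ≤
      (∫ t in Ici (0 : ℝ), |l * exp (-(l * t)) - l' * exp (-(l' * t))|) * C := by
  have hint {r : ℝ} (hr : 0 < r) : Integrable (expAverage S r f) μ :=
    .of_bound (continuous_expAverage hS hSx hfc hf hr).aestronglyMeasurable C
      (ae_of_all _ fun _ => (norm_eq_abs _).trans_le (abs_expAverage_le hr hf))
  rw [← integral_sub (hint hl) (hint hl')]
  exact abs_integral_le_of_abs_le μ fun x => abs_expAverage_sub_expAverage_le (hSx x) hfc hf hl hl'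

lemma fortetMourierDist_expAverage_le (hS : ∀ t, 0 ≤ t → Continuous (S t))
    (hSx : ∀ x, ContinuousOn (fun t => S t x) (Ici 0))
    (hSL : ∀ t, 0 ≤ t → ∀ x y, dist (S t x) (S t y) ≤ L * exp (α * t) * dist x y)
    (hl : 0 < l) (hl' : 0 < l') (hαl' : α < l') :
    fortetMourierDist (fun f => ∫ x, expAverage S l f x ∂μ)
        (fun f => ∫ x, expAverage S l' f x ∂ν) ≤
      (∫ t in Ici (0 : ℝ), |l * exp (-(l * t)) - l' * exp (-(l' * t))|) +
        max 1 (L * (l' / (l' - α))) *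
          fortetMourierDist (fun f => ∫ x, f x ∂μ) (fun f => ∫ x, f x ∂ν) := by
  set K := max 1 (L * (l' / (l' - α)))
  have hK : 0 < K := lt_max_of_lt_left one_pos
  refine fortetMourierDist_le (add_nonneg (integral_nonneg fun _ => abs_nonneg _)
    (mul_nonneg hK.le (fortetMourierDist_nonneg _ _))) fun f hf hfL => ?_
  have hG : |∫ x, expAverage S l' f x ∂μ - ∫ x, expAverage S l' f x ∂ν| ≤
      K * fortetMourierDist (fun f => ∫ x, f x ∂μ) (fun f => ∫ x, f x ∂ν) := by
    refine abs_integral_sub_integral_le_mul_fortetMourierDist μ ν hK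
      (fun z => (abs_expAverage_le hl' hf).trans (le_max_left _ _)) fun x y => ?_
    refine (dist_expAverage_le hSx hSL (fun x y => ?_) hfL.continuous hf hl' hαl' zero_le_one
      x y).trans ?_
    · simpa using hfL.dist_le_mul x y
    · rw [one_mul]
      gcongr
      exact le_max_right _ _
  calc |∫ x, expAverage S l f x ∂μ - ∫ x, expAverage S l' f x ∂ν|
      ≤ |∫ x, expAverage S l f x ∂μ - ∫ x, expAverage S l' f x ∂μ| +
          |∫ x, expAverage S l' f x ∂μ - ∫ x, expAverage S l' f x ∂ν| := abs_sub_le _ _ _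
    _ ≤ _ := by
      simpa using add_le_add (abs_integral_expAverage_sub_le μ hS hSx hfL.continuous hf hl hl') hG

end Integrated

variable {I : Set ℝ} {lbar : ℝ} {μ : ℝ → Measure Ω}

theorem tendsto_fortetMourierDist_expAverage (hS : ∀ t, 0 ≤ t → Continuous (S t))
    (hSx : ∀ x, ContinuousOn (fun t => S t x) (Ici 0))
    (hSL : ∀ t, 0 ≤ t → ∀ x y, dist (S t x) (S t y) ≤ L * exp (α * t) * dist x y)
    (hI : ∀ l ∈ I, 0 < l) (hlbar : lbar ∈ I) (hαlbar : α < lbar)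
    (hprob : ∀ l ∈ I, IsProbabilityMeasure (μ l))
    (hμ : Tendsto (fun l => fortetMourierDist (fun f => ∫ x, f x ∂μ l)
      (fun f => ∫ x, f x ∂μ lbar)) (𝓝[I] lbar) (𝓝 0)) :
    Tendsto (fun l => fortetMourierDist (fun f => ∫ x, expAverage S l f x ∂μ l)
      (fun f => ∫ x, expAverage S lbar f x ∂μ lbar)) (𝓝[I] lbar) (𝓝 0) := by
  have hD := (tendsto_integral_abs_expDensity_sub (hI lbar hlbar)).mono_left
    (nhdsWithin_le_nhds (s := I))
  refine squeeze_zero' (Eventually.of_forall fun _ => fortetMourierDist_nonneg _ _)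
    (eventually_mem_nhdsWithin.mono fun l hl => ?_)
    (by simpa using hD.add (hμ.const_mul (max 1 (L * (lbar / (lbar - α))))))
  have := hprob l hl
  have := hprob lbar hlbar
  exact fortetMourierDist_expAverage_le (μ l) (μ lbar) hS hSx hSL (hI l hl) (hI lbar hlbar) hαlbar

theorem tendsto_integral_expAverage (hS : ∀ t, 0 ≤ t → Continuous (S t))
    (hSx : ∀ x, ContinuousOn (fun t => S t x) (Ici 0))
    (hI : ∀ l ∈ I, 0 < l) (hlbar : lbar ∈ I) (hprob : ∀ l ∈ I, IsProbabilityMeasure (μ l))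
    (hμ : Tendsto (fun l => fortetMourierDist (fun f => ∫ x, f x ∂μ l)
      (fun f => ∫ x, f x ∂μ lbar)) (𝓝[I] lbar) (𝓝 0))
    {f : Ω → ℝ} {C : ℝ} (hfc : Continuous f) (hf : ∀ z, |f z| ≤ C) :
    Tendsto (fun l => ∫ x, expAverage S l f x ∂μ l) (𝓝[I] lbar)
      (𝓝 (∫ x, expAverage S lbar f x ∂μ lbar)) := by
  have hweak := tendsto_integral_nhdsWithin_of_tendsto_fortetMourierDist hlbar hprob hμ
    (.ofNormedAddCommGroup (expAverage S lbar f)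
      (continuous_expAverage hS hSx hfc hf (hI lbar hlbar)) C
      fun x => (norm_eq_abs _).trans_le (abs_expAverage_le (hI lbar hlbar) hf))
  have hrate : Tendsto (fun l => ∫ x, expAverage S l f x ∂μ l -
      ∫ x, expAverage S lbar f x ∂μ l) (𝓝[I] lbar) (𝓝 0) := by
    refine squeeze_zero_norm' (eventually_mem_nhdsWithin.mono fun l hl => ?_)
      (by simpa using ((tendsto_integral_abs_expDensity_sub (hI lbar hlbar)).mono_left
        nhdsWithin_le_nhds).mul_const C)
    have := hprob l hl
    exact abs_integral_expAverage_sub_le (μ l) hS hSx hfc hf (hI l hl) (hI lbar hlbar)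
  simpa using hrate.add hweak

end Metric

theorem stmt_16_general
    {H : Type*} [NormedAddCommGroup H] [MeasurableSpace H] [BorelSpace H]
    (X : Set H)
    (S : ℝ → X → X)
    (hScont : ContinuousOn (fun q : ℝ × X => S q.1 q.2) (Set.Ici 0 ×ˢ Set.univ))
    (L α : ℝ)
    (hA2 : ∀ t : ℝ, 0 ≤ t → ∀ x y : X,
      ‖(S t x : H) - S t y‖ ≤ L * Real.exp (α * t) * ‖(x : H) - y‖)
    -- an interval I of (ᾱ, ∞) containing λ̄
    (I : Set ℝ) (hIsub : I ⊆ Set.Ioi (max 0 α))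
    (lbar : ℝ) (hlbar : lbar ∈ I)
    -- the family of probability measures, FM-continuous at λ̄
    (μ : ℝ → Measure X) (hprob : ∀ l ∈ I, IsProbabilityMeasure (μ l))
    (hμconv : Tendsto (fun l : ℝ =>
        sSup {r : ℝ | ∃ f : X → ℝ, (∀ z, |f z| ≤ 1) ∧ LipschitzWith 1 f ∧
          r = |(∫ x, f x ∂(μ l)) - ∫ x, f x ∂(μ lbar)|})
      (nhdsWithin lbar I) (nhds 0)) :
    -- FM convergence of ν_λ = μ_λ G_λ to ν_λ̄ ...
    Tendsto (fun l : ℝ =>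
        sSup {r : ℝ | ∃ f : X → ℝ, (∀ z, |f z| ≤ 1) ∧ LipschitzWith 1 f ∧
          r = |(∫ x, (∫ t in Set.Ici (0 : ℝ), l * Real.exp (-(l * t)) * f (S t x)) ∂(μ l)) -
               ∫ x, (∫ t in Set.Ici (0 : ℝ),
                  lbar * Real.exp (-(lbar * t)) * f (S t x)) ∂(μ lbar)|})
      (nhdsWithin lbar I) (nhds 0) ∧
    -- ... and in particular weak convergence of ν_λ to ν_λ̄
    (∀ f : X → ℝ, Continuous f → (∃ C : ℝ, ∀ z, |f z| ≤ C) →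
      Tendsto (fun l : ℝ =>
          ∫ x, (∫ t in Set.Ici (0 : ℝ), l * Real.exp (-(l * t)) * f (S t x)) ∂(μ l))
        (nhdsWithin lbar I)
        (nhds (∫ x, (∫ t in Set.Ici (0 : ℝ),
            lbar * Real.exp (-(lbar * t)) * f (S t x)) ∂(μ lbar)))) := by
  have hpos (l : ℝ) (hl : l ∈ I) : 0 < l := (le_max_left 0 α).trans_lt (hIsub hl)
  have hαlbar : α < lbar := (le_max_right 0 α).trans_lt (hIsub hlbar)
  have hSx (x : X) : ContinuousOn (fun t => S t x) (Ici 0) :=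
    hScont.comp (continuous_id.prodMk continuous_const).continuousOn fun t ht => ⟨ht, trivial⟩
  have hS (t : ℝ) (ht : 0 ≤ t) : Continuous (S t) :=
    hScont.comp_continuous (continuous_const.prodMk continuous_id) fun _ => ⟨ht, trivial⟩
  have hSL (t : ℝ) (ht : 0 ≤ t) (x y : X) :
      dist (S t x) (S t y) ≤ L * exp (α * t) * dist x y := by
    simpa only [Subtype.dist_eq, dist_eq_norm] using hA2 t ht x y
  exact ⟨tendsto_fortetMourierDist_expAverage hS hSx hSL hpos hlbar hαlbar hprob hμconv,
    fun f hfc ⟨C, hf⟩ => tendsto_integral_expAverage hS hSx hpos hlbar hprob hμconv hfc hf⟩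

/-- (Continuous dependence of the invariant measure of the PDMP on the
jump rate.)  Assume (A2), let `ᾱ = max{0,α}` and let `λ̄ > ᾱ`.  Let `(μ_λ)` be a family of
Borel probability measures on `X`, indexed by an interval `I ⊆ (ᾱ,∞)` containing `λ̄`,
with `‖μ_λ − μ_λ̄‖_FM → 0` as `λ → λ̄`.  Put `ν_λ := μ_λ G_λ`, i.e.
`⟨f, ν_λ⟩ = ∫_X ∫₀^∞ λ e^{−λt} f(S(t,x)) dt μ_λ(dx)`.  Then `‖ν_λ − ν_λ̄‖_FM → 0` as
`λ → λ̄`; in particular `ν_λ → ν_λ̄` weakly. -/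
theorem stmt_16
    {H : Type*} [NormedAddCommGroup H] [NormedSpace ℝ H] [CompleteSpace H]
    [SecondCountableTopology H] [MeasurableSpace H] [BorelSpace H]
    (X : Set H) (hXc : IsClosed X) (hXne : X.Nonempty)
    (S : ℝ → X → X)
    (hS0 : ∀ x, S 0 x = x)
    (hSadd : ∀ s t : ℝ, 0 ≤ s → 0 ≤ t → ∀ x, S (s + t) x = S s (S t x))
    (hScont : ContinuousOn (fun q : ℝ × X => S q.1 q.2) (Set.Ici 0 ×ˢ Set.univ))
    (L α : ℝ) (hL : 0 < L)
    (hA2 : ∀ t : ℝ, 0 ≤ t → ∀ x y : X,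
      ‖(S t x : H) - S t y‖ ≤ L * Real.exp (α * t) * ‖(x : H) - y‖)
    -- an interval I of (ᾱ, ∞) containing λ̄
    (I : Set ℝ) (hIint : I.OrdConnected) (hIsub : I ⊆ Set.Ioi (max 0 α))
    (lbar : ℝ) (hlbar : lbar ∈ I)
    -- the family of probability measures, FM-continuous at λ̄
    (μ : ℝ → Measure X) (hprob : ∀ l ∈ I, IsProbabilityMeasure (μ l))
    (hμconv : Tendsto (fun l : ℝ =>
        sSup {r : ℝ | ∃ f : X → ℝ, (∀ z, |f z| ≤ 1) ∧ LipschitzWith 1 f ∧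
          r = |(∫ x, f x ∂(μ l)) - ∫ x, f x ∂(μ lbar)|})
      (nhdsWithin lbar I) (nhds 0)) :
    -- FM convergence of ν_λ = μ_λ G_λ to ν_λ̄ ...
    Tendsto (fun l : ℝ =>
        sSup {r : ℝ | ∃ f : X → ℝ, (∀ z, |f z| ≤ 1) ∧ LipschitzWith 1 f ∧
          r = |(∫ x, (∫ t in Set.Ici (0 : ℝ), l * Real.exp (-(l * t)) * f (S t x)) ∂(μ l)) -
               ∫ x, (∫ t in Set.Ici (0 : ℝ),
                  lbar * Real.exp (-(lbar * t)) * f (S t x)) ∂(μ lbar)|})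
      (nhdsWithin lbar I) (nhds 0) ∧
    -- ... and in particular weak convergence of ν_λ to ν_λ̄
    (∀ f : X → ℝ, Continuous f → (∃ C : ℝ, ∀ z, |f z| ≤ C) →
      Tendsto (fun l : ℝ =>
          ∫ x, (∫ t in Set.Ici (0 : ℝ), l * Real.exp (-(l * t)) * f (S t x)) ∂(μ l))
        (nhdsWithin lbar I)
        (nhds (∫ x, (∫ t in Set.Ici (0 : ℝ),
            lbar * Real.exp (-(lbar * t)) * f (S t x)) ∂(μ lbar)))) :=
  stmt_16_general X S hScont L α hA2 I hIsub lbar hlbar μ hprob hμconv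
end
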